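/- Let H be a reflective connected bipartite graph and let R ⊆ X be a set of size two, where X is one of the parts of the bipartition of H. Then there is a positive integer s such that for every graph G with hom(H, G) > 0: hom(H, G; X) ≥ hom(H, G; R)^s / hom(H, G)^{s-1}. -/

import Mathlib

/-!
Each reflection step is a Cauchy–Schwarz inequality `hom(H,G;R)² ≤ hom(H,G;ψ(R)) · hom(H,G)`;
iterating it along the chain `R = R₀, …, R_m = X` gives the claim with `s = 2^m`.

For one step, fix the values `g` of a homomorphism on the fixed set `F` of `φ`. Since `F`
separates `A` from `B`, a homomorphism with these values is the same as a pair of `φ`-invariant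
homomorphisms with these values: its foldings by `φ` onto `A ∪ F` and onto `B ∪ F`. Let
`a(g,v)` and `b(g,v)` count the invariant homomorphisms sending `R ∩ (A ∪ F)`, resp.
`R ∩ (B ∪ F)`, to `v`. Then `hom(R) = Σ a·b` and, as `ψ(R) ∩ (B ∪ F) = φ(R ∩ (A ∪ F))`,
`hom(ψ(R)) = Σ a²`; finally `Σ_v b(g,v) ≤ c(g)`, the number of all invariant homomorphisms
with values `g`, and `hom(H,G) = Σ_g c(g)²`.
-/

open SimpleGraph

/-- `hom(H, G)`: the number of graph homomorphisms from `H` to `G`. -/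
noncomputable def homCount {α β : Type} (H : SimpleGraph α) (G : SimpleGraph β) : ℕ :=
  Nat.card (H →g G)

/-- `hom(H, G; R)`: homomorphisms mapping all of `R` to one common vertex. -/
noncomputable def homCountOn {α β : Type} (H : SimpleGraph α) (G : SimpleGraph β)
    (R : Set α) : ℕ :=
  Nat.card {f : H →g G // ∃ v : β, ∀ u ∈ R, f u = v}

/-- The fixed-point set `F_φ` of a graph automorphism `φ`. -/
def FixedSet {V : Type} {H : SimpleGraph V} (φ : H ≃g H) : Set V := {v | φ v = v}

/-- `(A, B, φ)` is a nice triple of `H`: `φ` is an involutive automorphism; `A`, `B` and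
`F_φ` partition `V(H)`; `F_φ` separates `A` and `B` (every walk from `A` to `B` meets
`F_φ`); and `φ(A) = B`. -/
def IsNiceTriple {V : Type} (H : SimpleGraph V) (A B : Set V) (φ : H ≃g H) : Prop :=
  (∀ v, φ (φ v) = v) ∧
  Disjoint A B ∧ Disjoint A (FixedSet φ) ∧ Disjoint B (FixedSet φ) ∧
  A ∪ B ∪ FixedSet φ = Set.univ ∧
  (∀ a ∈ A, ∀ b ∈ B, ∀ w : H.Walk a b, ∃ v ∈ w.support, v ∈ FixedSet φ) ∧
  ⇑φ '' A = B

/-- `H` is bipartite with parts `X₁` and `X₂`. -/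
def IsBipartitionOf {V : Type} (H : SimpleGraph V) (X₁ X₂ : Set V) : Prop :=
  Disjoint X₁ X₂ ∧ X₁ ∪ X₂ = Set.univ ∧
  ∀ ⦃u v⦄, H.Adj u v → (u ∈ X₁ ∧ v ∈ X₂) ∨ (u ∈ X₂ ∧ v ∈ X₁)

/-- `R` is admissible for the nice triple `(A, B, φ)` (relative to the bipartition
`X₁, X₂` of `H`): all vertices of `R` lie in the same part, and `R` meets both
`A ∪ F_φ` and `B ∪ F_φ`. -/
def IsAdmissible {V : Type} {H : SimpleGraph V} (X₁ X₂ A B : Set V) (φ : H ≃g H)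
    (R : Set V) : Prop :=
  (R ⊆ X₁ ∨ R ⊆ X₂) ∧ (R ∩ (A ∪ FixedSet φ)).Nonempty ∧ (R ∩ (B ∪ FixedSet φ)).Nonempty

/-- `ψ_{A,B,φ}(R) = (R ∩ (A ∪ F_φ)) ∪ φ(R ∩ A)`. -/
def psiSet {V : Type} {H : SimpleGraph V} (A : Set V) (φ : H ≃g H) (R : Set V) : Set V :=
  (R ∩ (A ∪ FixedSet φ)) ∪ ⇑φ '' (R ∩ A)

/-- `H` (connected bipartite, with parts `X₁, X₂`) is reflective: every two-element
subset `R` of a part `X` can be transformed into `X` by a sequence of reflections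
`R_{j+1} = ψ_{A_j,B_j,φ_j}(R_j)` along nice triples for which `R_j` is admissible. -/
def IsReflective {V : Type} (H : SimpleGraph V) (X₁ X₂ : Set V) : Prop :=
  ∀ X : Set V, X = X₁ ∨ X = X₂ → ∀ R : Set V, R ⊆ X → R.ncard = 2 →
    ∃ (m : ℕ) (A B : ℕ → Set V) (φ : ℕ → (H ≃g H)) (Rs : ℕ → Set V),
      Rs 0 = R ∧ Rs m = X ∧
      ∀ j < m, IsNiceTriple H (A j) (B j) (φ j) ∧
        IsAdmissible X₁ X₂ (A j) (B j) (φ j) (Rs j) ∧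
        Rs (j + 1) = psiSet (A j) (φ j) (Rs j)


open Finset Set
open scoped Classical

theorem sq_sum_sum_mul_le {ι κ R : Type*} [CommSemiring R] [LinearOrder R]
    [IsStrictOrderedRing R] [ExistsAddOfLE R] (s : Finset ι) (t : Finset κ) (a b : ι → κ → R)
    (c : ι → R) (hb : ∀ i ∈ s, ∀ k ∈ t, 0 ≤ b i k) (hbc : ∀ i ∈ s, ∑ k ∈ t, b i k ≤ c i) :
    (∑ i ∈ s, ∑ k ∈ t, a i k * b i k) ^ 2 ≤
      (∑ i ∈ s, ∑ k ∈ t, a i k ^ 2) * ∑ i ∈ s, c i ^ 2 := by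
  have hb2 : ∑ i ∈ s, ∑ k ∈ t, b i k ^ 2 ≤ ∑ i ∈ s, c i ^ 2 := by
    gcongr ∑ i ∈ s, ?_ with i hi
    exact (sum_sq_le_sq_sum_of_nonneg (hb i hi)).trans
      (pow_le_pow_left₀ (sum_nonneg (hb i hi)) (hbc i hi) 2)
  simp only [← Finset.sum_product'] at hb2 ⊢
  calc _ ≤ (∑ p ∈ s ×ˢ t, a p.1 p.2 ^ 2) * ∑ p ∈ s ×ˢ t, b p.1 p.2 ^ 2 :=
        sum_mul_sq_le_sq_mul_sq _ _ _
    _ ≤ _ := by gcongr; exact sum_nonneg fun _ _ => sq_nonneg _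

theorem pow_two_pow_le_mul_pow {m N : ℕ} (c : ℕ → ℕ) (h : ∀ j < m, c j ^ 2 ≤ c (j + 1) * N) :
    c 0 ^ 2 ^ m ≤ c m * N ^ (2 ^ m - 1) := by
  induction m with
  | zero => simp
  | succ k ih =>
    have hk : 2 ^ (k + 1) - 1 = (2 ^ k - 1) * 2 + 1 := by
      have := Nat.one_le_two_pow (n := k)
      rw [pow_succ]
      omega
    calc c 0 ^ 2 ^ (k + 1) = (c 0 ^ 2 ^ k) ^ 2 := by rw [pow_succ, pow_mul]
      _ ≤ (c k * N ^ (2 ^ k - 1)) ^ 2 := by gcongr; exact ih fun j hj => h j (by omega)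
      _ = c k ^ 2 * N ^ ((2 ^ k - 1) * 2) := by rw [mul_pow, pow_mul]
      _ ≤ c (k + 1) * N * N ^ ((2 ^ k - 1) * 2) := by gcongr; exact h k (by omega)
      _ = c (k + 1) * N ^ (2 ^ (k + 1) - 1) := by rw [hk, pow_succ']; ring

noncomputable instance {V W : Type} [Finite V] [Finite W] {H : SimpleGraph V}
    {G : SimpleGraph W} : Fintype (H →g G) :=
  Fintype.ofFinite _

namespace IsNiceTriple

variable {V W : Type} {H : SimpleGraph V} {A B : Set V} {φ : H ≃g H} {u w : V}

theorem apply_apply (h : IsNiceTriple H A B φ) (u : V) : φ (φ u) = u := h.1 u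

theorem notMem_right (h : IsNiceTriple H A B φ) (hu : u ∈ A) : u ∉ B :=
  Set.disjoint_left.mp h.2.1 hu

theorem notMem_left (h : IsNiceTriple H A B φ) (hu : u ∈ B) : u ∉ A :=
  Set.disjoint_right.mp h.2.1 hu

theorem notMem_left_of_mem_fixedSet (h : IsNiceTriple H A B φ) (hu : u ∈ FixedSet φ) :
    u ∉ A :=
  Set.disjoint_right.mp h.2.2.1 hu

theorem notMem_right_of_mem_fixedSet (h : IsNiceTriple H A B φ) (hu : u ∈ FixedSet φ) :
    u ∉ B :=
  Set.disjoint_right.mp h.2.2.2.1 hu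

theorem apply_eq_of_notMem (h : IsNiceTriple H A B φ) (hA : u ∉ A) (hB : u ∉ B) : φ u = u := by
  have hu := h.2.2.2.2.1 ▸ mem_univ u
  simp only [mem_union] at hu
  tauto

theorem image_left (h : IsNiceTriple H A B φ) : φ '' A = B := h.2.2.2.2.2.2

theorem image_right (h : IsNiceTriple H A B φ) : φ '' B = A := by
  rw [← h.image_left, image_image]
  simp [h.apply_apply]

theorem apply_mem_right (h : IsNiceTriple H A B φ) (hu : u ∈ A) : φ u ∈ B :=
  h.image_left ▸ mem_image_of_mem φ hu

theorem apply_mem_left (h : IsNiceTriple H A B φ) (hu : u ∈ B) : φ u ∈ A :=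
  h.image_right ▸ mem_image_of_mem φ hu

theorem compl_right (h : IsNiceTriple H A B φ) : Bᶜ = A ∪ FixedSet φ := by
  ext u
  refine ⟨fun hB => ?_, ?_⟩
  · by_cases hA : u ∈ A
    · exact Or.inl hA
    · exact Or.inr (h.apply_eq_of_notMem hA hB)
  · rintro (hA | hF)
    · exact h.notMem_right hA
    · exact h.notMem_right_of_mem_fixedSet hF

theorem symm (h : IsNiceTriple H A B φ) : IsNiceTriple H B A φ := by
  have himage := h.image_right
  obtain ⟨hinv, hAB, hAF, hBF, hcov, hsep, -⟩ := h
  refine ⟨hinv, hAB.symm, hBF, hAF, by rwa [union_comm B], fun b hb a ha p => ?_, himage⟩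
  obtain ⟨x, hx, hxF⟩ := hsep a ha b hb p.reverse
  exact ⟨x, by simpa using hx, hxF⟩

theorem not_adj (h : IsNiceTriple H A B φ) (hu : u ∈ A) (hw : w ∈ B) : ¬ H.Adj u w := by
  intro huw
  obtain ⟨x, hx, hxF⟩ := h.2.2.2.2.2.1 u hu w hw huw.toWalk
  simp only [Adj.toWalk, Walk.support_cons, Walk.support_nil, List.mem_cons,
    List.not_mem_nil, or_false] at hx
  rcases hx with rfl | rfl
  · exact h.notMem_left_of_mem_fixedSet hxF hu
  · exact h.notMem_right_of_mem_fixedSet hxF hw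

theorem adj_notMem (h : IsNiceTriple H A B φ) (huw : H.Adj u w) :
    (u ∉ B ∧ w ∉ B) ∨ (u ∉ A ∧ w ∉ A) := by
  by_cases hu : u ∈ A <;> by_cases hw : w ∈ A
  · exact Or.inl ⟨h.notMem_right hu, h.notMem_right hw⟩
  · exact Or.inl ⟨h.notMem_right hu, fun hwB => h.not_adj hu hwB huw⟩
  · exact Or.inl ⟨fun huB => h.not_adj hw huB huw.symm, h.notMem_right hw⟩
  · exact Or.inr ⟨hu, hw⟩

theorem psiSet_inter_compl_right (h : IsNiceTriple H A B φ) (R : Set V) :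
    psiSet A φ R ∩ Bᶜ = R ∩ Bᶜ := by
  rw [psiSet, ← h.compl_right, union_inter_distrib_right, inter_assoc, inter_self,
    union_eq_left]
  rintro _ ⟨⟨u, hu, rfl⟩, hφu⟩
  exact absurd (h.apply_mem_right hu.2) hφu

theorem psiSet_inter_compl_left (h : IsNiceTriple H A B φ) (R : Set V) :
    psiSet A φ R ∩ Aᶜ = φ '' (R ∩ Bᶜ) := by
  rw [psiSet, ← h.compl_right]
  ext u
  constructor
  · rintro ⟨⟨hR, hB⟩ | ⟨x, hx, rfl⟩, hA⟩
    · exact ⟨u, ⟨hR, hB⟩, h.apply_eq_of_notMem hA hB⟩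
    · exact mem_image_of_mem φ ⟨hx.1, h.notMem_right hx.2⟩
  · rintro ⟨x, ⟨hR, hB⟩, rfl⟩
    by_cases hA : x ∈ A
    · exact ⟨Or.inr (mem_image_of_mem φ ⟨hR, hA⟩), h.notMem_left (h.apply_mem_right hA)⟩
    · rw [h.apply_eq_of_notMem hA hB]
      exact ⟨Or.inl ⟨hR, hB⟩, hA⟩

theorem piecewise_apply_of_notMem_left (h : IsNiceTriple H A B φ) {f₁ f₂ : V → W}
    (hf : ∀ x ∈ FixedSet φ, f₁ x = f₂ x) (hu : u ∉ A) : B.piecewise f₂ f₁ u = f₂ u := by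
  by_cases hB : u ∈ B
  · exact piecewise_eq_of_mem _ _ _ hB
  · rw [piecewise_eq_of_notMem _ _ _ hB, hf u (h.apply_eq_of_notMem hu hB)]

noncomputable def fold (h : IsNiceTriple H A B φ) : H →g H where
  toFun := B.piecewise φ id
  map_rel' {u w} huw := by
    rcases h.adj_notMem huw with ⟨hu, hw⟩ | ⟨hu, hw⟩
    · simpa [piecewise_eq_of_notMem _ _ _ hu, piecewise_eq_of_notMem _ _ _ hw] using huw
    · rw [h.piecewise_apply_of_notMem_left (f₁ := id) (fun x hx => hx.symm) hu,
        h.piecewise_apply_of_notMem_left (f₁ := id) (fun x hx => hx.symm) hw]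
      exact φ.map_adj_iff.mpr huw

theorem fold_apply_of_mem (h : IsNiceTriple H A B φ) (hu : u ∈ B) : h.fold u = φ u :=
  piecewise_eq_of_mem _ _ _ hu

theorem fold_apply_of_notMem (h : IsNiceTriple H A B φ) (hu : u ∉ B) : h.fold u = u :=
  piecewise_eq_of_notMem _ _ _ hu

theorem fold_apply_notMem (h : IsNiceTriple H A B φ) (u : V) : h.fold u ∉ B := by
  by_cases hu : u ∈ B
  · rw [h.fold_apply_of_mem hu]
    exact h.notMem_right (h.apply_mem_left hu)
  · rwa [h.fold_apply_of_notMem hu]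

theorem fold_apply_apply (h : IsNiceTriple H A B φ) (u : V) : h.fold (φ u) = h.fold u := by
  by_cases hB : u ∈ B
  · rw [h.fold_apply_of_notMem (h.notMem_right (h.apply_mem_left hB)), h.fold_apply_of_mem hB]
  · by_cases hA : u ∈ A
    · rw [h.fold_apply_of_mem (h.apply_mem_right hA), h.apply_apply, h.fold_apply_of_notMem hB]
    · rw [h.apply_eq_of_notMem hA hB]

theorem apply_fold_of_forall_apply_eq {f : V → W} (h : IsNiceTriple H A B φ)
    (hf : ∀ x, f (φ x) = f x) (u : V) : f (h.fold u) = f u := by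
  by_cases hu : u ∈ B
  · rw [h.fold_apply_of_mem hu, hf]
  · rw [h.fold_apply_of_notMem hu]

variable {G : SimpleGraph W}

noncomputable def glue (h : IsNiceTriple H A B φ) (f₁ f₂ : H →g G)
    (hf : ∀ x ∈ FixedSet φ, f₁ x = f₂ x) : H →g G where
  toFun := B.piecewise f₂ f₁
  map_rel' {u w} huw := by
    rcases h.adj_notMem huw with ⟨hu, hw⟩ | ⟨hu, hw⟩
    · simpa [piecewise_eq_of_notMem _ _ _ hu, piecewise_eq_of_notMem _ _ _ hw] using
        f₁.map_adj huw
    · rw [h.piecewise_apply_of_notMem_left hf hu, h.piecewise_apply_of_notMem_left hf hw]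
      exact f₂.map_adj huw

theorem glue_apply_of_notMem_right (h : IsNiceTriple H A B φ) {f₁ f₂ : H →g G}
    (hf : ∀ x ∈ FixedSet φ, f₁ x = f₂ x) (hu : u ∉ B) : h.glue f₁ f₂ hf u = f₁ u :=
  piecewise_eq_of_notMem _ _ _ hu

theorem glue_apply_of_notMem_left (h : IsNiceTriple H A B φ) {f₁ f₂ : H →g G}
    (hf : ∀ x ∈ FixedSet φ, f₁ x = f₂ x) (hu : u ∉ A) : h.glue f₁ f₂ hf u = f₂ u :=
  h.piecewise_apply_of_notMem_left hf hu

end IsNiceTriple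

section Fibers

variable {V W : Type} [Fintype V] [Fintype W]

noncomputable def homFiber (H : SimpleGraph V) (G : SimpleGraph W) (F : Set V) (g : F → W)
    (T : Set V) (Y : Set W) : Finset (H →g G) :=
  {f | F.domRestrict f = g ∧ MapsTo f T Y}

noncomputable def symFiber {H : SimpleGraph V} (G : SimpleGraph W) (φ : H ≃g H)
    (g : FixedSet φ → W) (T : Set V) (Y : Set W) : Finset (H →g G) :=
  {f ∈ homFiber H G (FixedSet φ) g T Y | ∀ u, f (φ u) = f u}

variable {H : SimpleGraph V} {G : SimpleGraph W}

@[simp]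
theorem mem_homFiber {F : Set V} {g : F → W} {T : Set V} {Y : Set W} {f : H →g G} :
    f ∈ homFiber H G F g T Y ↔ F.domRestrict f = g ∧ MapsTo f T Y := by
  simp [homFiber]

@[simp]
theorem mem_symFiber {φ : H ≃g H} {g : FixedSet φ → W} {T : Set V} {Y : Set W} {f : H →g G} :
    f ∈ symFiber G φ g T Y ↔
      (FixedSet φ).domRestrict f = g ∧ MapsTo f T Y ∧ ∀ u, f (φ u) = f u := by
  simp [symFiber, and_assoc]

theorem homCount_eq_card : homCount H G = Fintype.card (H →g G) :=
  Nat.card_eq_fintype_card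

theorem homCountOn_eq_card (R : Set V) :
    homCountOn H G R = #{f : H →g G | ∃ v, MapsTo f R {v}} := by
  rw [homCountOn, Nat.card_eq_fintype_card, Fintype.card_subtype]
  simp only [MapsTo, mem_singleton_iff]

theorem card_univ_eq_sum_homFiber (F : Set V) :
    Fintype.card (H →g G) = ∑ g : F → W, #(homFiber H G F g ∅ ∅) := by
  rw [← card_univ, card_eq_sum_card_fiberwise (f := fun f : H →g G => F.domRestrict f)
    (t := univ) (by simp)]
  congr! 2 with g
  ext f
  simp

theorem card_constOn_eq_sum_homFiber (F : Set V) {T : Set V} (hT : T.Nonempty) :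
    #{f : H →g G | ∃ v, MapsTo f T {v}} = ∑ g : F → W, ∑ v, #(homFiber H G F g T {v}) := by
  obtain ⟨r, hr⟩ := hT
  rw [card_eq_sum_card_fiberwise (f := fun f : H →g G => (F.domRestrict f, f r)) (t := univ)
    (by simp), Fintype.sum_prod_type]
  congr! 3 with g _ v
  ext f
  simp only [mem_filter, Finset.mem_univ, true_and, Prod.mk.injEq, mem_homFiber]
  constructor
  · rintro ⟨⟨w, hw⟩, hg, rfl⟩
    exact ⟨hg, fun u hu => (hw hu).trans (hw hr).symm⟩
  · rintro ⟨hg, hv⟩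
    exact ⟨⟨v, hv⟩, hg, hv hr⟩

theorem sum_card_symFiber_le (φ : H ≃g H) (g : FixedSet φ → W) {T : Set V} (hT : T.Nonempty) :
    ∑ v, #(symFiber G φ g T {v}) ≤ #(symFiber G φ g ∅ ∅) := by
  obtain ⟨r, hr⟩ := hT
  rw [card_eq_sum_card_fiberwise (f := fun f : H →g G => f r) (t := univ) (by simp)]
  gcongr with v
  intro f
  simp only [mem_symFiber, mem_filter, mapsTo_empty, true_and]
  exact fun ⟨hg, hv, hφ⟩ => ⟨⟨hg, hφ⟩, hv hr⟩

theorem symFiber_image (φ : H ≃g H) (g : FixedSet φ → W) (T : Set V) (Y : Set W) :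
    symFiber G φ g (φ '' T) Y = symFiber G φ g T Y := by
  ext f
  simp only [mem_symFiber, mapsTo_image_iff]
  by_cases hφ : ∀ u, f (φ u) = f u
  · rw [show ⇑f ∘ ⇑φ = f from funext hφ]
  · simp [hφ]

end Fibers

namespace IsNiceTriple

variable {V W : Type} [Fintype V] [Fintype W] {H : SimpleGraph V} {G : SimpleGraph W}
  {A B : Set V} {φ : H ≃g H}

theorem comp_fold_mem_symFiber (h : IsNiceTriple H A B φ) {g : FixedSet φ → W} {T : Set V}
    {Y : Set W} {f : H →g G} (hf : f ∈ homFiber H G (FixedSet φ) g T Y) :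
    f.comp h.fold ∈ symFiber G φ g (T ∩ Bᶜ) Y := by
  rw [mem_homFiber] at hf
  refine mem_symFiber.mpr ⟨?_, fun u hu => ?_, fun u => ?_⟩
  · ext ⟨u, hu⟩
    simp [h.fold_apply_of_notMem (h.notMem_right_of_mem_fixedSet hu), ← hf.1]
  · simpa [h.fold_apply_of_notMem hu.2] using hf.2 hu.1
  · simp [h.fold_apply_apply]

theorem glue_mem_homFiber (h : IsNiceTriple H A B φ) {g : FixedSet φ → W} {T : Set V}
    {Y : Set W} {f₁ f₂ : H →g G} (hf₁ : f₁ ∈ symFiber G φ g (T ∩ Bᶜ) Y)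
    (hf₂ : f₂ ∈ symFiber G φ g (T ∩ Aᶜ) Y) (hf : ∀ x ∈ FixedSet φ, f₁ x = f₂ x) :
    h.glue f₁ f₂ hf ∈ homFiber H G (FixedSet φ) g T Y := by
  rw [mem_symFiber] at hf₁ hf₂
  refine mem_homFiber.mpr ⟨?_, fun u hu => ?_⟩
  · ext ⟨u, hu⟩
    simp [h.glue_apply_of_notMem_right hf (h.notMem_right_of_mem_fixedSet hu), ← hf₁.1]
  · by_cases hB : u ∈ B
    · rw [h.glue_apply_of_notMem_left hf (h.notMem_left hB)]
      exact hf₂.2.1 ⟨hu, h.notMem_left hB⟩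
    · rw [h.glue_apply_of_notMem_right hf hB]
      exact hf₁.2.1 ⟨hu, hB⟩

theorem card_homFiber_eq_mul (h : IsNiceTriple H A B φ) (g : FixedSet φ → W) (T : Set V)
    (Y : Set W) :
    #(homFiber H G (FixedSet φ) g T Y) =
      #(symFiber G φ g (T ∩ Bᶜ) Y) * #(symFiber G φ g (T ∩ Aᶜ) Y) := by
  have agree : ∀ p ∈ symFiber G φ g (T ∩ Bᶜ) Y ×ˢ symFiber G φ g (T ∩ Aᶜ) Y,
      ∀ x ∈ FixedSet φ, p.1 x = p.2 x := by
    simp only [mem_product, mem_symFiber]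
    exact fun p hp x hx => congrFun (hp.1.1.trans hp.2.1.symm) ⟨x, hx⟩
  rw [← card_product]
  refine card_bij' (fun f _ => (f.comp h.fold, f.comp h.symm.fold))
    (fun p hp => h.glue p.1 p.2 (agree p hp)) (fun f hf => ?_) (fun p hp => ?_)
    (fun f hf => ?_) (fun p hp => ?_)
  · exact mem_product.mpr ⟨h.comp_fold_mem_symFiber hf, h.symm.comp_fold_mem_symFiber hf⟩
  · obtain ⟨hp₁, hp₂⟩ := mem_product.mp hp
    exact h.glue_mem_homFiber hp₁ hp₂ _
  · ext u
    by_cases hB : u ∈ B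
    · have hA := h.notMem_left hB
      simp [h.glue_apply_of_notMem_left _ hA, h.symm.fold_apply_of_notMem hA]
    · simp [h.glue_apply_of_notMem_right _ hB, h.fold_apply_of_notMem hB]
  · obtain ⟨hp₁, hp₂⟩ := mem_product.mp hp
    rw [mem_symFiber] at hp₁ hp₂
    refine Prod.ext (RelHom.ext fun u => ?_) (RelHom.ext fun u => ?_)
    · simp [h.glue_apply_of_notMem_right _ (h.fold_apply_notMem u),
        h.apply_fold_of_forall_apply_eq hp₁.2.2]
    · simp [h.glue_apply_of_notMem_left _ (h.symm.fold_apply_notMem u),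
        h.symm.apply_fold_of_forall_apply_eq hp₂.2.2]

theorem homCountOn_sq_le (h : IsNiceTriple H A B φ) {R : Set V}
    (hA : (R ∩ (A ∪ FixedSet φ)).Nonempty) (hB : (R ∩ (B ∪ FixedSet φ)).Nonempty) :
    homCountOn H G R ^ 2 ≤ homCountOn H G (psiSet A φ R) * homCount H G := by
  rw [← h.compl_right] at hA
  rw [← h.symm.compl_right] at hB
  have hψ : (psiSet A φ R).Nonempty :=
    (h.psiSet_inter_compl_right R ▸ hA).mono Set.inter_subset_left
  rw [homCountOn_eq_card, homCountOn_eq_card, homCount_eq_card,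
    card_constOn_eq_sum_homFiber (FixedSet φ) (hA.mono Set.inter_subset_left),
    card_constOn_eq_sum_homFiber (FixedSet φ) hψ, card_univ_eq_sum_homFiber (FixedSet φ)]
  simp only [h.card_homFiber_eq_mul, h.psiSet_inter_compl_right, h.psiSet_inter_compl_left,
    symFiber_image, empty_inter, ← sq]
  exact sq_sum_sum_mul_le _ _ _ _ _ (fun _ _ _ _ => Nat.zero_le _)
    fun g _ => sum_card_symFiber_le φ g hB

end IsNiceTriple

theorem hom_part_ge_of_reflective_general {V : Type} [Fintype V] (H : SimpleGraph V)
    (X₁ X₂ : Set V) (hrefl : IsReflective H X₁ X₂) (X : Set V) (hX : X = X₁ ∨ X = X₂)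
    (R : Set V) (hRX : R ⊆ X) (hR : R.ncard = 2) :
    ∃ s : ℕ, 0 < s ∧ ∀ (W : Type) [Fintype W] (G : SimpleGraph W),
      0 < homCount H G →
      (homCountOn H G R : ℝ) ^ s / (homCount H G : ℝ) ^ (s - 1) ≤
        (homCountOn H G X : ℝ) := by
  obtain ⟨m, A, B, φ, Rs, rfl, rfl, hstep⟩ := hrefl X hX R hRX hR
  refine ⟨2 ^ m, by positivity, fun W _ G hG => ?_⟩
  have hchain := pow_two_pow_le_mul_pow (fun j => homCountOn H G (Rs j)) fun j hj => by
    obtain ⟨hnice, ⟨-, hA, hB⟩, hnext⟩ := hstep j hj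
    exact hnext ▸ hnice.homCountOn_sq_le hA hB
  rw [div_le_iff₀ (by positivity)]
  exact_mod_cast hchain

/-- If `H` is a reflective connected bipartite graph and `R ⊆ X` has size two, where `X`
is one of the parts of `H`, then there is a positive integer `s` such that for every
graph `G` with `hom(H, G) > 0`:
`hom(H, G; X) ≥ hom(H, G; R)^s / hom(H, G)^(s-1)`. -/
theorem hom_part_ge_of_reflective {V : Type} [Fintype V] (H : SimpleGraph V)
    (X₁ X₂ : Set V) (hbip : IsBipartitionOf H X₁ X₂) (hconn : H.Connected)
    (hrefl : IsReflective H X₁ X₂) (X : Set V) (hX : X = X₁ ∨ X = X₂)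
    (R : Set V) (hRX : R ⊆ X) (hR : R.ncard = 2) :
    ∃ s : ℕ, 0 < s ∧ ∀ (W : Type) [Fintype W] (G : SimpleGraph W),
      0 < homCount H G →
      (homCountOn H G R : ℝ) ^ s / (homCount H G : ℝ) ^ (s - 1) ≤
        (homCountOn H G X : ℝ) :=
  hom_part_ge_of_reflective_general H X₁ X₂ hrefl X hX R hRX hR
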